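/- Let K ⊂ ℝ² be a convex polygon with rB ⊂ K ⊂ RB. For every δ ∈ (0, 0.02(r/R)²] there exist vertices v₁,…,v_m of K (in anticlockwise order) such that, with Q = conv{v₁,…,v_m}: (i) Q ⊂ K ⊂ (1 + 4R²r^{−2}δ)·Q, and (ii) for each i (cyclically), the angle ∠v_i 0 v_{i+1} is at least δ. -/

import Mathlib

open Real Set
open scoped Pointwise

/-- Cross product of two planar vectors. -/
def cross (u v : ℝ × ℝ) : ℝ := u.1 * v.2 - u.2 * v.1

/-- The Euclidean norm on the plane `ℝ × ℝ`. -/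
noncomputable def eN (p : ℝ × ℝ) : ℝ := Real.sqrt (p.1 ^ 2 + p.2 ^ 2)

/-- The (unsigned) angle at the origin between the vectors `u` and `v`. -/
noncomputable def ang (u v : ℝ × ℝ) : ℝ :=
  Real.arccos ((u.1 * v.1 + u.2 * v.2) / (eN u * eN v))

/-- The closed Euclidean disk of radius `ρ` centred at the origin. -/
def eBall (ρ : ℝ) : Set (ℝ × ℝ) := {p | eN p ≤ ρ}

/-!
Pick greedily a maximal set `S` of extreme points of `K` any two of which subtend an angle
`≥ δ` at the origin, so that every extreme point `e` of `K` is within angle `δ` of some `s ∈ S`.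
Such an `s` is also radially close to `e`: if `|e| - |s|` were large, the line through `e` and `s`
would pass within distance `r` of the origin, and `s` would lie strictly between `e` and a point
of `rB ⊆ K`, contradicting extremality. Hence a linear functional maximised over `K` at `e` is at
most `1 + 4R²δ/r²` times its value at `s`, and Hahn–Banach separation gives
`K ⊆ (1 + 4R²δ/r²) • conv S`. As `-r u ∈ K` for every unit vector `u`, no closed half-plane
through the origin contains `S`; so, listed by argument, consecutive points of `S` are less than
`π` apart and their cross products are positive.
-/

section LocallyConvex
variable {E : Type*} [AddCommGroup E] [Module ℝ E]

theorem smul_eq_self_of_mem_extremePoints {K : Set E} (h0 : (0 : E) ∈ K) {u : E} {t : ℝ}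
    (hu : u ∈ K.extremePoints ℝ) (htu : t • u ∈ K.extremePoints ℝ) (ht0 : 0 < t) (ht1 : t ≤ 1) :
    t • u = u := by
  rcases ht1.lt_or_eq with ht1 | rfl
  · have hseg : t • u ∈ openSegment ℝ u 0 := ⟨t, 1 - t, ht0, by linarith, by ring, by simp⟩
    exact (htu.2 hu.1 h0 hseg).symm
  · exact one_smul ℝ u

variable [TopologicalSpace E] [T2Space E] [IsTopologicalAddGroup E] [ContinuousSMul ℝ E]
  [LocallyConvexSpace ℝ E]

theorem IsCompact.exists_mem_extremePoints_forall_le {K : Set E} (hK : IsCompact K)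
    (hne : K.Nonempty) (f : StrongDual ℝ E) : ∃ e ∈ K.extremePoints ℝ, ∀ x ∈ K, f x ≤ f e := by
  obtain ⟨z, hzK, hz⟩ := hK.exists_isMaxOn hne f.continuous.continuousOn
  have hexp : IsExposed ℝ K (f.toExposed K) := ContinuousLinearMap.toExposed.isExposed
  obtain ⟨e, he⟩ := (hexp.isCompact hK).extremePoints_nonempty ⟨z, hzK, fun x hx => hz hx⟩
  exact ⟨e, hexp.isExtreme.extremePoints_subset_extremePoints he, (extremePoints_subset he).2⟩

theorem subset_smul_convexHull_of_forall_le {K S : Set E} (hS : S.Finite) (c : ℝ)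
    (h : ∀ f : StrongDual ℝ E, ∀ x ∈ K, ∃ s ∈ S, f x ≤ c * f s) : K ⊆ c • convexHull ℝ S := by
  intro x hx
  by_contra hxQ
  have hQ : IsCompact (c • convexHull ℝ S) := by
    simpa only [image_smul] using (hS.isCompact_convexHull ℝ).image (continuous_const_smul c)
  obtain ⟨f, u, hfQ, hfx⟩ :=
    geometric_hahn_banach_closed_point ((convex_convexHull ℝ S).smul c) hQ.isClosed hxQ
  obtain ⟨s, hs, hfs⟩ := h f x hx
  have := hfQ _ (smul_mem_smul_set (subset_convexHull ℝ S hs))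
  rw [map_smul, smul_eq_mul] at this
  linarith

end LocallyConvex

theorem exists_maximal_independent_subset {α : Type*} [DecidableEq α] {C : α → α → Prop}
    (hC : ∀ a b, C a b → C b a) (E : Finset α) :
    ∃ S ⊆ E, (S : Set α).Pairwise (fun a b => ¬C a b) ∧ ∀ e ∈ E, e ∉ S → ∃ s ∈ S, C s e := by
  induction E using Finset.induction_on with
  | empty => exact ⟨∅, subset_rfl, by simp, by simp⟩
  | insert a E _ ih =>
    obtain ⟨S, hSE, hS, hdom⟩ := ih
    by_cases haS : ∃ s ∈ S, C s a
    · refine ⟨S, hSE.trans (Finset.subset_insert a E), hS, fun e he heS => ?_⟩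
      rcases Finset.mem_insert.1 he with rfl | he
      · exact haS
      · exact hdom e he heS
    · push Not at haS
      refine ⟨insert a S, Finset.insert_subset_insert a hSE, ?_, fun e he heS => ?_⟩
      · rw [Finset.coe_insert]
        exact hS.insert fun b hb _ => ⟨fun h => haS b hb (hC _ _ h), haS b hb⟩
      · rcases Finset.mem_insert.1 he with rfl | he
        · exact absurd (Finset.mem_insert_self _ _) heS
        · obtain ⟨s, hs, hse⟩ := hdom e he fun h => heS (Finset.mem_insert_of_mem h)
          exact ⟨s, Finset.mem_insert_of_mem hs, hse⟩

def dot (u v : ℝ × ℝ) : ℝ := u.1 * v.1 + u.2 * v.2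

def toComplex (p : ℝ × ℝ) : ℂ := ⟨p.1, p.2⟩

noncomputable def polarAngle (p : ℝ × ℝ) : ℝ := Complex.arg (toComplex p)

lemma eN_eq_norm (p : ℝ × ℝ) : eN p = ‖toComplex p‖ := by
  simp [eN, toComplex, Complex.norm_def, Complex.normSq_apply, sq]

lemma toComplex_injective : Function.Injective toComplex := fun p q h => by
  simpa [toComplex, Complex.ext_iff, Prod.ext_iff] using h

@[simp] lemma toComplex_sub (p q : ℝ × ℝ) : toComplex (p - q) = toComplex p - toComplex q := by
  simp [toComplex, Complex.ext_iff]

@[simp] lemma toComplex_smul (t : ℝ) (p : ℝ × ℝ) : toComplex (t • p) = t * toComplex p := by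
  simp [toComplex, Complex.ext_iff]

@[simp] lemma toComplex_zero : toComplex 0 = 0 := rfl

lemma eN_nonneg (p : ℝ × ℝ) : 0 ≤ eN p := Real.sqrt_nonneg _

lemma eN_sq (p : ℝ × ℝ) : eN p ^ 2 = p.1 ^ 2 + p.2 ^ 2 := Real.sq_sqrt (by positivity)

lemma eN_pos {p : ℝ × ℝ} (hp : p ≠ 0) : 0 < eN p := by
  rw [eN_eq_norm, norm_pos_iff, ← toComplex_zero]
  exact toComplex_injective.ne hp

lemma eN_smul (t : ℝ) (p : ℝ × ℝ) : eN (t • p) = |t| * eN p := by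
  simp [eN_eq_norm]

lemma eN_sub_eN_le (p q : ℝ × ℝ) : eN p - eN q ≤ eN (p - q) := by
  simpa [eN_eq_norm] using norm_sub_norm_le (toComplex p) (toComplex q)

lemma eN_cos_sin (φ : ℝ) : eN (cos φ, sin φ) = 1 := by
  simp [eN]

lemma polar_form (p : ℝ × ℝ) :
    p.1 = eN p * cos (polarAngle p) ∧ p.2 = eN p * sin (polarAngle p) := by
  rw [eN_eq_norm, polarAngle, Complex.norm_mul_cos_arg, Complex.norm_mul_sin_arg]
  exact ⟨rfl, rfl⟩

lemma dot_eq_polar (u v : ℝ × ℝ) :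
    dot u v = eN u * eN v * cos (polarAngle v - polarAngle u) := by
  obtain ⟨hu1, hu2⟩ := polar_form u
  obtain ⟨hv1, hv2⟩ := polar_form v
  rw [cos_sub, dot, hu1, hu2, hv1, hv2]; ring

lemma cross_eq_polar (u v : ℝ × ℝ) :
    cross u v = eN u * eN v * sin (polarAngle v - polarAngle u) := by
  obtain ⟨hu1, hu2⟩ := polar_form u
  obtain ⟨hv1, hv2⟩ := polar_form v
  rw [sin_sub, cross, hu1, hu2, hv1, hv2]; ring

lemma dot_cos_sin (p : ℝ × ℝ) (φ : ℝ) :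
    dot p (cos φ, sin φ) = eN p * cos (polarAngle p - φ) := by
  obtain ⟨h1, h2⟩ := polar_form p
  rw [cos_sub, dot, h1, h2]; ring

lemma cross_sq_add_dot_sq (u v : ℝ × ℝ) : cross u v ^ 2 + dot u v ^ 2 = (eN u * eN v) ^ 2 := by
  rw [cross_eq_polar, dot_eq_polar]
  linear_combination (eN u * eN v) ^ 2 * sin_sq_add_cos_sq (polarAngle v - polarAngle u)

lemma abs_dot_le (u v : ℝ × ℝ) : |dot u v| ≤ eN u * eN v :=
  abs_le_of_sq_le_sq (by nlinarith [cross_sq_add_dot_sq u v])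
    (mul_nonneg (eN_nonneg u) (eN_nonneg v))

lemma abs_cross_le (u v : ℝ × ℝ) : |cross u v| ≤ eN u * eN v :=
  abs_le_of_sq_le_sq (by nlinarith [cross_sq_add_dot_sq u v])
    (mul_nonneg (eN_nonneg u) (eN_nonneg v))

lemma cross_swap (u v : ℝ × ℝ) : cross v u = -cross u v := by simp only [cross]; ring

lemma dot_smul (t : ℝ) (u v : ℝ × ℝ) : dot (t • u) v = t * dot u v := by
  simp only [dot, Prod.smul_fst, Prod.smul_snd, smul_eq_mul]; ring

lemma dot_self (v : ℝ × ℝ) : dot v v = eN v ^ 2 := by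
  rw [eN_sq, dot]; ring

lemma exists_dot_eq (f : StrongDual ℝ (ℝ × ℝ)) : ∃ ν, ∀ p, f p = dot p ν := by
  refine ⟨(f (1, 0), f (0, 1)), fun p => ?_⟩
  have hp : p = p.1 • ((1 : ℝ), (0 : ℝ)) + p.2 • ((0 : ℝ), (1 : ℝ)) := by ext <;> simp
  nth_rewrite 1 [hp]
  rw [map_add, map_smul, map_smul, smul_eq_mul, smul_eq_mul, dot]

lemma ang_comm (u v : ℝ × ℝ) : ang u v = ang v u := by
  simp only [ang, mul_comm]

lemma cos_ang {u v : ℝ × ℝ} (hu : u ≠ 0) (hv : v ≠ 0) :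
    cos (ang u v) = dot u v / (eN u * eN v) := by
  have huv : 0 < eN u * eN v := mul_pos (eN_pos hu) (eN_pos hv)
  obtain ⟨h1, h2⟩ := abs_le.1 (abs_dot_le u v)
  exact cos_arccos ((le_div_iff₀ huv).2 (by simpa [dot] using h1))
    ((div_le_iff₀ huv).2 (by simpa [dot] using h2))

lemma mul_cos_le_dot_of_ang_le {u v : ℝ × ℝ} (hu : u ≠ 0) (hv : v ≠ 0) {δ : ℝ} (hδπ : δ ≤ π)
    (h : ang u v ≤ δ) : eN u * eN v * cos δ ≤ dot u v := by
  have huv : 0 < eN u * eN v := mul_pos (eN_pos hu) (eN_pos hv)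
  have hcos : cos δ ≤ cos (ang u v) := cos_le_cos_of_nonneg_of_le_pi (arccos_nonneg _) hδπ h
  rw [cos_ang hu hv, le_div_iff₀ huv] at hcos
  linarith

lemma abs_cross_le_of_mul_cos_le_dot {u v : ℝ × ℝ} {δ : ℝ} (hδ : 0 ≤ δ) (hcos : 0 ≤ cos δ)
    (h : eN u * eN v * cos δ ≤ dot u v) : |cross u v| ≤ eN u * eN v * δ := by
  have hn : 0 ≤ eN u * eN v := mul_nonneg (eN_nonneg u) (eN_nonneg v)
  have hdot : (eN u * eN v * cos δ) ^ 2 ≤ dot u v ^ 2 := pow_le_pow_left₀ (by positivity) h 2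
  have hsin : 1 - cos δ ^ 2 ≤ δ ^ 2 := by nlinarith [sin_sq_add_cos_sq δ, sin_sq_le_sq (x := δ)]
  refine abs_le_of_sq_le_sq ?_ (by positivity)
  nlinarith [cross_sq_add_dot_sq u v, mul_le_mul_of_nonneg_left hsin (sq_nonneg (eN u * eN v))]

lemma mul_le_dot_of_radial_cross_bounds {r η δ : ℝ} {s e ν : ℝ × ℝ} (hr : 0 < r) (hη : 0 ≤ η)
    (hcos : 0 ≤ cos δ) (hre : r ≤ eN e) (hradial : eN e - η * r ≤ eN s)
    (hcross : |cross e s| ≤ η * r ^ 2) (hclose : eN s * eN e * cos δ ≤ dot s e)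
    (hmax : r * eN ν ≤ dot e ν) :
    dot e ν * ((1 - η) * cos δ - η) ≤ dot s ν := by
  have hM0 : 0 ≤ dot e ν := (mul_nonneg hr.le (eN_nonneg ν)).trans hmax
  have hq : (eN e - η * r) * eN e * cos δ ≤ dot s e :=
    (mul_le_mul_of_nonneg_right (mul_le_mul_of_nonneg_right hradial (eN_nonneg e)) hcos).trans
      hclose
  have hCc : -(η * r * eN e * dot e ν) ≤ cross e s * cross e ν := by
    have h1 : |cross e s * cross e ν| ≤ η * r ^ 2 * (eN e * eN ν) := by
      rw [abs_mul]
      exact mul_le_mul hcross (abs_cross_le e ν) (abs_nonneg _) (mul_nonneg hη (sq_nonneg r))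
    have h2 := mul_le_mul_of_nonneg_left hmax (mul_nonneg (mul_nonneg hη hr.le) (eN_nonneg e))
    linarith [neg_abs_le (cross e s * cross e ν)]
  -- Decompose `s` along `e` and its normal.
  have hid : eN e ^ 2 * dot s ν = dot s e * dot e ν + cross e s * cross e ν := by
    rw [eN_sq]; simp only [dot, cross]; ring
  have hmain : eN e ^ 2 * (dot e ν * ((1 - η) * cos δ - η)) ≤ eN e ^ 2 * dot s ν := by
    have hgap : 0 ≤ eN e * dot e ν * (η * (eN e - r) * (cos δ + 1)) :=
      mul_nonneg (mul_nonneg (eN_nonneg e) hM0)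
        (mul_nonneg (mul_nonneg hη (by linarith)) (by linarith))
    rw [hid]
    nlinarith [mul_le_mul_of_nonneg_right hq hM0]
  exact le_of_mul_le_mul_left hmain (by nlinarith)

lemma sub_lt_pi_of_forall_exists_cos_neg {a b : ℝ}
    (h : ∀ φ, ∃ t ∈ Icc b (a + 2 * π), cos (t - φ) < 0) : b - a < π := by
  by_contra! hab
  obtain ⟨t, ⟨htb, hta⟩, hcos⟩ := h ((a + b) / 2 + π)
  exact hcos.not_ge (cos_nonneg_of_mem_Icc ⟨by linarith, by linarith⟩)

lemma sin_sub_pos_of_strictMono {m : ℕ} {θ : Fin m → ℝ} (hθ : StrictMono θ)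
    (hmem : ∀ k, θ k ∈ Ioc (-π) π) (h : ∀ φ, ∃ k, cos (θ k - φ) < 0) (i j : Fin m)
    (hij : (j : ℕ) = (i + 1) % m) : 0 < sin (θ j - θ i) := by
  have hshift : ∀ k φ, cos (θ k + 2 * π - φ) = cos (θ k - φ) := fun k φ => by
    rw [show θ k + 2 * π - φ = θ k - φ + 2 * π by ring, cos_add_two_pi]
  have hle : ∀ k l : Fin m, (k : ℕ) ≤ l → θ k ≤ θ l := fun k l hkl => hθ.monotone hkl
  by_cases hi : (i : ℕ) + 1 < m
  · have hj : (j : ℕ) = i + 1 := by rw [hij, Nat.mod_eq_of_lt hi]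
    have hlt : θ i < θ j := hθ (Fin.lt_def.2 (by omega))
    refine sin_pos_of_pos_of_lt_pi (by linarith) (sub_lt_pi_of_forall_exists_cos_neg fun φ => ?_)
    obtain ⟨k, hk⟩ := h φ
    rcases le_or_gt (k : ℕ) i with hki | hki
    · refine ⟨θ k + 2 * π, ⟨?_, ?_⟩, by rwa [hshift]⟩
      · linarith [(hmem j).2, (hmem k).1]
      · linarith [hle k i hki]
    · refine ⟨θ k, ⟨hle j k (by omega), ?_⟩, hk⟩
      linarith [(hmem k).2, (hmem i).1, pi_pos]
  · have hj : (j : ℕ) = 0 := by rw [hij, show (i : ℕ) + 1 = m by omega, Nat.mod_self]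
    rw [← sin_add_two_pi, show θ j - θ i + 2 * π = θ j + 2 * π - θ i by ring]
    refine sin_pos_of_pos_of_lt_pi (by linarith [(hmem j).1, (hmem i).2])
      (sub_lt_pi_of_forall_exists_cos_neg fun φ => ?_)
    obtain ⟨k, hk⟩ := h φ
    refine ⟨θ k + 2 * π, ⟨?_, ?_⟩, by rwa [hshift]⟩
    · linarith [hle j k (by omega)]
    · linarith [hle k i (by omega)]

lemma exists_enumeration_cross_pos (S : Finset (ℝ × ℝ)) (h0 : ∀ s ∈ S, s ≠ 0)
    (hinj : Set.InjOn polarAngle S) (h : ∀ φ, ∃ s ∈ S, cos (polarAngle s - φ) < 0) :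
    ∃ m, ∃ v : ℕ → ℝ × ℝ,
      {p | ∃ i < m, p = v i} = ↑S ∧ ∀ i < m, 0 < cross (v i) (v ((i + 1) % m)) := by
  classical
  obtain ⟨m, hm⟩ : ∃ m, (S.image polarAngle).card = m := ⟨_, rfl⟩
  set θ := (S.image polarAngle).orderEmbOfFin hm
  have hrange : ∀ s ∈ S, ∃ k, θ k = polarAngle s := fun s hs => by
    rw [← Set.mem_range, Finset.range_orderEmbOfFin]
    exact Finset.mem_image_of_mem _ hs
  choose w hwS hwθ using fun k =>
    Finset.mem_image.1 ((S.image polarAngle).orderEmbOfFin_mem hm k)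
  set v : ℕ → ℝ × ℝ := fun i => if hi : i < m then w ⟨i, hi⟩ else 0
  have hv : ∀ i (hi : i < m), v i = w ⟨i, hi⟩ := fun i hi => dif_pos hi
  refine ⟨m, v, ?_, fun i hi => ?_⟩
  · ext p
    constructor
    · rintro ⟨i, hi, rfl⟩
      rw [hv i hi]
      exact hwS _
    · intro hp
      obtain ⟨k, hk⟩ := hrange p hp
      exact ⟨k, k.2, by rw [hv k k.2]; exact hinj hp (hwS k) (hk ▸ hwθ k).symm⟩
  · have hj : (i + 1) % m < m := Nat.mod_lt _ (by omega)
    rw [hv i hi, hv _ hj, cross_eq_polar, hwθ, hwθ]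
    refine mul_pos (mul_pos (eN_pos (h0 _ (hwS _))) (eN_pos (h0 _ (hwS _))))
      (sin_sub_pos_of_strictMono θ.strictMono (fun k => ?_) (fun φ => ?_) _ _ rfl)
    · rw [← hwθ k]
      exact ⟨Complex.neg_pi_lt_arg _, Complex.arg_le_pi _⟩
    · obtain ⟨s, hs, hcos⟩ := h φ
      obtain ⟨k, hk⟩ := hrange s hs
      exact ⟨k, hk ▸ hcos⟩

lemma le_div_sq_mul_and_le {r R δ : ℝ} (hr : 0 < r) (hrR : r ≤ R) (hδ : 0 ≤ δ)
    (hδ' : δ ≤ 0.02 * (r / R) ^ 2) : δ ≤ R ^ 2 * δ / r ^ 2 ∧ R ^ 2 * δ / r ^ 2 ≤ 0.02 := by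
  have hR : 0 < R := hr.trans_le hrR
  constructor
  · rw [le_div_iff₀ (by positivity)]
    nlinarith [mul_le_mul hrR hrR hr.le hR.le]
  · rw [div_le_iff₀ (by positivity)]
    calc R ^ 2 * δ ≤ R ^ 2 * (0.02 * (r / R) ^ 2) := by gcongr
      _ = 0.02 * r ^ 2 := by field_simp

section ConvexBody
variable {K : Set (ℝ × ℝ)} {r : ℝ}

lemma zero_mem_of_eBall_subset (hr : 0 ≤ r) (hrB : eBall r ⊆ K) : (0 : ℝ × ℝ) ∈ K :=
  hrB (by simpa [eBall, eN] using hr)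

lemma ne_zero_of_mem_extremePoints (hr : 0 < r) (hrB : eBall r ⊆ K) {s : ℝ × ℝ}
    (hs : s ∈ K.extremePoints ℝ) : s ≠ 0 := by
  rintro rfl
  have hmem : ∀ x : ℝ, |x| = r → ((x, 0) : ℝ × ℝ) ∈ K := fun x hx =>
    hrB (by simp [eBall, eN, Real.sqrt_sq_eq_abs, hx])
  have hseg : (0 : ℝ × ℝ) ∈ openSegment ℝ (r, 0) (-r, 0) :=
    ⟨1 / 2, 1 / 2, by norm_num, by norm_num, by norm_num, by ext <;> simp⟩
  have := hs.2 (hmem r (abs_of_pos hr)) (hmem (-r) (by simp [abs_of_pos hr])) hseg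
  simp [hr.ne'] at this

lemma eq_of_polarAngle_eq (hr : 0 < r) (hrB : eBall r ⊆ K) {u w : ℝ × ℝ}
    (hu : u ∈ K.extremePoints ℝ) (hw : w ∈ K.extremePoints ℝ)
    (h : polarAngle u = polarAngle w) : u = w := by
  wlog hle : eN w ≤ eN u generalizing u w
  · exact (this hw hu h.symm (le_of_not_ge hle)).symm
  have hu0 := eN_pos (ne_zero_of_mem_extremePoints hr hrB hu)
  have hw0 := eN_pos (ne_zero_of_mem_extremePoints hr hrB hw)
  have hwu : (eN w / eN u) • u = w := by
    obtain ⟨hu1, hu2⟩ := polar_form u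
    obtain ⟨hw1, hw2⟩ := polar_form w
    ext <;> simp only [Prod.smul_fst, Prod.smul_snd, smul_eq_mul]
    · rw [hu1, hw1, h]; field_simp
    · rw [hu2, hw2, h]; field_simp
  have := smul_eq_self_of_mem_extremePoints (zero_mem_of_eBall_subset hr.le hrB) hu
    (hwu.symm ▸ hw) (by positivity) ((div_le_one hu0).2 hle)
  rw [← hwu, this]

lemma mul_eN_sub_le_abs_cross (hr : 0 < r) (hrB : eBall r ⊆ K) {s e : ℝ × ℝ}
    (hs : s ∈ K.extremePoints ℝ) (he : e ∈ K) (hdot : eN s ^ 2 < dot s e) :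
    r * eN (e - s) ≤ |cross e s| := by
  by_contra! hlt
  have hne : e ≠ s := by rintro rfl; rw [dot_self] at hdot; exact hdot.false
  set D := eN (e - s) ^ 2
  have hD : 0 < D := by have := eN_pos (sub_ne_zero.2 hne); positivity
  set τ := (dot s e - eN s ^ 2) / D
  have hτ : 0 < τ := div_pos (by linarith) hD
  -- `p` is the foot of the perpendicular from `0` to the line through `e` and `s`.
  set p := s + τ • (s - e)
  have hpD : eN p ^ 2 * D = cross e s ^ 2 := by
    simp only [D, τ, p, eN_sq, dot, cross, Prod.fst_add, Prod.snd_add, Prod.smul_fst,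
      Prod.smul_snd, Prod.fst_sub, Prod.snd_sub, smul_eq_mul] at hD ⊢
    field_simp
    ring
  have hpK : p ∈ K := by
    have hsq : |cross e s| ^ 2 < (r * eN (e - s)) ^ 2 :=
      pow_lt_pow_left₀ hlt (abs_nonneg _) two_ne_zero
    rw [sq_abs, mul_pow] at hsq
    have hp : eN p ^ 2 ≤ r ^ 2 := le_of_mul_le_mul_right (by linarith) hD
    exact hrB ((pow_le_pow_iff_left₀ (eN_nonneg p) hr.le two_ne_zero).1 hp)
  have hseg : s ∈ openSegment ℝ e p :=
    ⟨τ / (1 + τ), 1 / (1 + τ), by positivity, by positivity, by field_simp; ring, by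
      ext <;> simp [p] <;> field_simp <;> ring⟩
  exact hne (hs.2 he hpK hseg)

lemma eN_sub_eN_mul_le (hr : 0 < r) (hrB : eBall r ⊆ K) {R δ : ℝ} (hrR : r ≤ R)
    (hδ : 0 ≤ δ) (hδ1 : δ ≤ 1) {s e : ℝ × ℝ} (hs : s ∈ K.extremePoints ℝ) (he : e ∈ K)
    (hsR : eN s ≤ R) (heR : eN e ≤ R) (hclose : eN s * eN e * cos δ ≤ dot s e) :
    (eN e - eN s) * r ≤ R ^ 2 * δ := by
  have hs0 := eN_pos (ne_zero_of_mem_extremePoints hr hrB hs)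
  rcases le_or_gt (dot s e) (eN s ^ 2) with hdot | hdot
  · have hcos : eN e * cos δ ≤ eN s := by
      refine le_of_mul_le_mul_left ?_ hs0
      nlinarith
    have h1 : eN e - eN s ≤ R * (δ ^ 2 / 2) := by
      nlinarith [one_sub_sq_div_two_le_cos (x := δ), eN_nonneg e]
    have hrδ : r * δ ≤ R := by nlinarith
    have hRδ : 0 ≤ R * δ := mul_nonneg (hr.le.trans hrR) hδ
    nlinarith [mul_le_mul_of_nonneg_right h1 hr.le, mul_le_mul_of_nonneg_left hrδ hRδ]
  · have hcos : 0 ≤ cos δ := by nlinarith [one_sub_sq_div_two_le_cos (x := δ)]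
    have hcross := abs_cross_le_of_mul_cos_le_dot hδ hcos hclose
    have hR2 : eN s * eN e * δ ≤ R ^ 2 * δ := by
      gcongr
      nlinarith [eN_nonneg s, eN_nonneg e]
    have hseg := mul_eN_sub_le_abs_cross hr hrB hs he hdot
    rw [cross_swap, abs_neg] at hseg
    nlinarith [eN_sub_eN_le e s]

lemma dot_le_mul_dot_of_mul_cos_le_dot (hr : 0 < r) (hrB : eBall r ⊆ K) {R δ : ℝ}
    (hRB : K ⊆ eBall R) (hrR : r ≤ R) (hδ : 0 < δ) (hδ' : δ ≤ 0.02 * (r / R) ^ 2)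
    {s e ν : ℝ × ℝ} (hs : s ∈ K.extremePoints ℝ) (he : e ∈ K)
    (hclose : eN s * eN e * cos δ ≤ dot s e) (hmax : r * eN ν ≤ dot e ν) :
    dot e ν ≤ (1 + 4 * R ^ 2 / r ^ 2 * δ) * dot s ν := by
  rcases eq_or_ne ν 0 with rfl | hν
  · simp [dot]
  have hR : 0 < R := hr.trans_le hrR
  set η := R ^ 2 * δ / r ^ 2 with hη_def
  have hRδ : R ^ 2 * δ = η * r ^ 2 := by rw [hη_def]; field_simp
  obtain ⟨hδη, hη⟩ := le_div_sq_mul_and_le hr hrR hδ.le hδ'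
  have hcos : 1 - δ ^ 2 / 2 ≤ cos δ := one_sub_sq_div_two_le_cos
  have hcos0 : 0 ≤ cos δ := by nlinarith
  have hre : r ≤ eN e := by
    have := (le_abs_self _).trans (abs_dot_le e ν)
    exact le_of_mul_le_mul_right (by linarith) (eN_pos hν)
  have hradial : eN e - η * r ≤ eN s := by
    have := eN_sub_eN_mul_le hr hrB hrR hδ.le (by linarith) hs he (hRB hs.1) (hRB he) hclose
    refine le_of_mul_le_mul_right ?_ hr
    nlinarith
  have hcross : |cross e s| ≤ η * r ^ 2 := by
    rw [cross_swap, abs_neg, ← hRδ]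
    refine (abs_cross_le_of_mul_cos_le_dot hδ.le hcos0 hclose).trans ?_
    gcongr
    exact mul_le_mul (hRB hs.1) (hRB he) (eN_nonneg e) hR.le |>.trans_eq (sq R).symm
  have hw := mul_le_dot_of_radial_cross_bounds hr (hδ.le.trans hδη) hcos0 hre hradial hcross
    hclose hmax
  have hcoef : 1 ≤ (1 + 4 * η) * ((1 - η) * cos δ - η) := by
    have hδ2 : δ ^ 2 ≤ 0.02 * η := by nlinarith
    have h1 : 1 - 2.01 * η ≤ (1 - η) * cos δ - η := by nlinarith
    nlinarith
  have hM0 : 0 ≤ dot e ν := (mul_pos hr (eN_pos hν)).le.trans hmax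
  calc dot e ν ≤ dot e ν * ((1 + 4 * η) * ((1 - η) * cos δ - η)) :=
        le_mul_of_one_le_right hM0 hcoef
    _ = (1 + 4 * η) * (dot e ν * ((1 - η) * cos δ - η)) := by ring
    _ ≤ (1 + 4 * η) * dot s ν := by gcongr
    _ = (1 + 4 * R ^ 2 / r ^ 2 * δ) * dot s ν := by rw [hη_def]; ring

lemma mul_eN_le_dot_of_forall_dot_le (hr : 0 ≤ r) (hrB : eBall r ⊆ K) {e ν : ℝ × ℝ}
    (hmax : ∀ x ∈ K, dot x ν ≤ dot e ν) : r * eN ν ≤ dot e ν := by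
  rcases eq_or_ne ν 0 with rfl | hν
  · simp [dot, eN]
  have hn := eN_pos hν
  have hmem : (r / eN ν) • ν ∈ K := hrB <| by
    show eN _ ≤ r
    rw [eN_smul, abs_of_nonneg (by positivity), div_mul_cancel₀ _ hn.ne']
  have := hmax _ hmem
  rwa [dot_smul, dot_self, sq, ← mul_assoc, div_mul_cancel₀ _ hn.ne'] at this

lemma exists_le_mul_of_forall_ang_lt (hK : IsCompact K) (hr : 0 < r) (hrB : eBall r ⊆ K)
    {R δ : ℝ} (hRB : K ⊆ eBall R) (hrR : r ≤ R) (hδ : 0 < δ) (hδ' : δ ≤ 0.02 * (r / R) ^ 2)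
    {S : Set (ℝ × ℝ)} (hS : S ⊆ K.extremePoints ℝ)
    (hdom : ∀ e ∈ K.extremePoints ℝ, e ∉ S → ∃ s ∈ S, ang s e < δ)
    (f : StrongDual ℝ (ℝ × ℝ)) (x : ℝ × ℝ) (hx : x ∈ K) :
    ∃ s ∈ S, f x ≤ (1 + 4 * R ^ 2 / r ^ 2 * δ) * f s := by
  obtain ⟨ν, hf⟩ := exists_dot_eq f
  obtain ⟨e, he, hmax⟩ :=
    hK.exists_mem_extremePoints_forall_le ⟨0, zero_mem_of_eBall_subset hr.le hrB⟩ f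
  simp only [hf] at hmax ⊢
  have he0 := ne_zero_of_mem_extremePoints hr hrB he
  obtain ⟨s, hsS, hclose⟩ : ∃ s ∈ S, eN s * eN e * cos δ ≤ dot s e := by
    by_cases heS : e ∈ S
    · refine ⟨e, heS, ?_⟩
      rw [dot_self, ← sq]
      exact mul_le_of_le_one_right (sq_nonneg _) (cos_le_one δ)
    · obtain ⟨s, hsS, hang⟩ := hdom e he heS
      refine ⟨s, hsS, mul_cos_le_dot_of_ang_le (ne_zero_of_mem_extremePoints hr hrB (hS hsS)) he0
        ?_ hang.le⟩
      have := le_div_sq_mul_and_le hr hrR hδ.le hδ'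
      linarith [pi_gt_three]
  exact ⟨s, hsS, (hmax x hx).trans <| dot_le_mul_dot_of_mul_cos_le_dot hr hrB hRB hrR hδ hδ'
    (hS hsS) he.1 hclose (mul_eN_le_dot_of_forall_dot_le hr.le hrB hmax)⟩

lemma exists_cos_neg_of_subset_smul_convexHull (hr : 0 < r) (hrB : eBall r ⊆ K)
    {S : Set (ℝ × ℝ)} {c : ℝ} (hc : 0 ≤ c) (hKS : K ⊆ c • convexHull ℝ S) (φ : ℝ) :
    ∃ s ∈ S, cos (polarAngle s - φ) < 0 := by
  by_contra! h
  set u : ℝ × ℝ := (cos φ, sin φ)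
  have hlin : IsLinearMap ℝ (fun p => dot p u) :=
    ⟨fun a b => by simp only [dot, Prod.fst_add, Prod.snd_add]; ring,
      fun t a => by simp only [dot_smul, smul_eq_mul]⟩
  have hhalf : convexHull ℝ S ⊆ {p | 0 ≤ dot p u} :=
    convexHull_min (fun s hs => by simpa [u, dot_cos_sin] using mul_nonneg (eN_nonneg s) (h s hs))
      (convex_halfSpace_ge hlin 0)
  obtain ⟨y, hy, hxy⟩ : (-r) • u ∈ c • convexHull ℝ S := hKS (hrB <| by
    show eN _ ≤ r
    rw [eN_smul, eN_cos_sin, abs_neg, abs_of_pos hr, mul_one])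
  have h1 := congrArg (fun p => dot p u) hxy
  simp only [dot_smul, dot_self, show eN u = 1 from eN_cos_sin φ] at h1
  nlinarith [mul_nonneg hc (hhalf hy)]

end ConvexBody

theorem stmt17 (V : Finset (ℝ × ℝ)) (K : Set (ℝ × ℝ)) (hKV : K = convexHull ℝ ↑V)
    (r R : ℝ) (hr : 0 < r) (hrR : r ≤ R) (hrB : eBall r ⊆ K) (hRB : K ⊆ eBall R)
    (δ : ℝ) (hδ : 0 < δ) (hδ' : δ ≤ 0.02 * (r / R) ^ 2) :
    ∃ m : ℕ, ∃ v : ℕ → ℝ × ℝ,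
      (∀ i < m, v i ∈ K.extremePoints ℝ) ∧
      (∀ i < m, 0 < cross (v i) (v ((i + 1) % m))) ∧
      (∀ i < m, δ ≤ ang (v i) (v ((i + 1) % m))) ∧
      (convexHull ℝ {p | ∃ i < m, p = v i} ⊆ K) ∧
      (K ⊆ (1 + 4 * R ^ 2 / r ^ 2 * δ) • convexHull ℝ {p | ∃ i < m, p = v i}) := by
  classical
  have hK : IsCompact K := hKV ▸ V.finite_toSet.isCompact_convexHull ℝ
  have hext : K.extremePoints ℝ ⊆ V := hKV ▸ extremePoints_convexHull_subset
  obtain ⟨S, hSE, hSsep, hSdom⟩ := exists_maximal_independent_subset (C := fun s e => ang s e < δ)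
    (fun s e h => show ang e s < δ by rwa [ang_comm]) (V.filter (· ∈ K.extremePoints ℝ))
  have hSext : ∀ s ∈ S, s ∈ K.extremePoints ℝ := fun s hs => (Finset.mem_filter.1 (hSE hs)).2
  have hcover : K ⊆ (1 + 4 * R ^ 2 / r ^ 2 * δ) • convexHull ℝ ↑S :=
    subset_smul_convexHull_of_forall_le S.finite_toSet _ <|
      exists_le_mul_of_forall_ang_lt hK hr hrB hRB hrR hδ hδ' hSext
        fun e he => hSdom e (Finset.mem_filter.2 ⟨hext he, he⟩)
  obtain ⟨m, v, hv, hcross⟩ := exists_enumeration_cross_pos S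
    (fun s hs => ne_zero_of_mem_extremePoints hr hrB (hSext s hs))
    (fun u hu w hw => eq_of_polarAngle_eq hr hrB (hSext u hu) (hSext w hw))
    (exists_cos_neg_of_subset_smul_convexHull hr hrB (by positivity) hcover)
  have hvS : ∀ i < m, v i ∈ S := fun i hi => by
    rw [← Finset.mem_coe, ← hv]
    exact ⟨i, hi, rfl⟩
  refine ⟨m, v, fun i hi => hSext _ (hvS i hi), hcross, fun i hi => ?_, ?_, hv ▸ hcover⟩
  · have hne : v i ≠ v ((i + 1) % m) := fun h =>
      (hcross i hi).ne' (by rw [h, cross]; ring)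
    exact not_lt.1 (hSsep (hvS i hi) (hvS _ (Nat.mod_lt _ (by omega))) hne)
  · rw [hv]
    exact convexHull_min (fun s hs => (hSext s hs).1) (hKV ▸ convex_convexHull ℝ _)
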